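/- (Invariance reduction to standard form) For every horizon m ≥ 0, every μ ∈ ℝ, every n > 0 and every λ ∈ ℝ, the Gaussian one-armed-bandit value function satisfies V_m(μ, n, γ, τ, λ) = τ^{−1/2} · V_m(0, n/τ, γ, 1, √τ·(λ − μ)). Hence only value-function calculations with posterior mean 0 and observation precision 1 are needed. -/

import Mathlib

/-! Measuring rewards in the units `x ↦ a (x - b)`, `a > 0`, maps the Gaussian model to one of
the same form: the belief `𝒩(μ, 1/n)` becomes `𝒩(a (μ - b), a²/n)`, so both precisions are
divided by `a²`, Bayesian updating commutes with the change of units, and every payoff, hence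
every value, is multiplied by `a`. Induction on the horizon, changing variables in the Gaussian
predictive integral, proves this; `a = √τ`, `b = μ` is the standard form. -/

open MeasureTheory ProbabilityTheory

/-- Finite-horizon value function of the Gaussian one-armed bandit:
`V γ τ m μ n λ`, with discount `γ`, observation precision `τ`, horizon `m`,
posterior state `(μ, n)` and safe-arm reward `λ`. The expectation over the
next observation is taken under the Gaussian predictive distribution
`𝒩(μ, 1/n + 1/τ)`. -/
noncomputable def V (γ τ : ℝ) : ℕ → ℝ → ℝ → ℝ → ℝ
  | 0, μ, _n, lam => max (μ - lam) 0 / (1 - γ)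
  | m + 1, μ, n, lam =>
      max (μ - lam + γ * ∫ y, V γ τ m ((n * μ + τ * y) / (n + τ)) (n + τ) lam
        ∂(gaussianReal μ (1 / n + 1 / τ).toNNReal)) 0

open scoped NNReal

lemma gaussianReal_map_mul_sub (μ : ℝ) (v : ℝ≥0) (c d : ℝ) :
    (gaussianReal μ v).map (fun y => c * (y - d))
      = gaussianReal (c * (μ - d)) (NNReal.mk (c ^ 2) (sq_nonneg c) * v) := by
  rw [show (fun y => c * (y - d)) = (c * ·) ∘ (· - d) from rfl,
    ← Measure.map_map (measurable_const_mul c) (measurable_sub_const d),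
    gaussianReal_map_sub_const, gaussianReal_map_const_mul]

lemma integral_gaussianReal_comp_mul_sub (f : ℝ → ℝ) (μ : ℝ) (v : ℝ≥0) {c : ℝ} (hc : c ≠ 0)
    (d : ℝ) :
    ∫ y, f (c * (y - d)) ∂gaussianReal μ v
      = ∫ z, f z ∂gaussianReal (c * (μ - d)) (NNReal.mk (c ^ 2) (sq_nonneg c) * v) := by
  let e : ℝ ≃ᵐ ℝ :=
    ((Homeomorph.subRight d).trans (Homeomorph.mulLeft₀ c hc)).toMeasurableEquiv
  rw [← gaussianReal_map_mul_sub]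
  exact (integral_map_equiv e f).symm

theorem mul_V_eq_V_rescaled (γ : ℝ) {τ a : ℝ} (hτ : 0 < τ) (ha : 0 < a) (b lam : ℝ) (m : ℕ) :
    ∀ μ n : ℝ, 0 < n →
      a * V γ τ m μ n lam = V γ (τ / a ^ 2) m (a * (μ - b)) (n / a ^ 2) (a * (lam - b)) := by
  induction m with
  | zero =>
    intro μ n _
    simp only [V]
    rw [← mul_div_assoc, mul_max_of_nonneg _ _ ha.le, mul_zero]
    ring_nf
  | succ m ih =>
    intro μ n hn
    have hvar : (1 / (n / a ^ 2) + 1 / (τ / a ^ 2)).toNNReal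
        = NNReal.mk (a ^ 2) (sq_nonneg a) * (1 / n + 1 / τ).toNNReal := by
      ext
      rw [NNReal.coe_mul, NNReal.coe_mk, Real.coe_toNNReal _ (by positivity),
        Real.coe_toNNReal _ (by positivity)]
      field_simp
    simp only [V]
    rw [hvar, ← integral_gaussianReal_comp_mul_sub _ _ _ ha.ne', mul_max_of_nonneg _ _ ha.le,
      mul_zero, mul_add, mul_left_comm a γ, ← integral_const_mul]
    rw [show a * (μ - b) - a * (lam - b) = a * (μ - lam) by ring]
    congr 4 with y
    rw [ih _ _ (by positivity), show n / a ^ 2 + τ / a ^ 2 = (n + τ) / a ^ 2 by ring]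
    congr 1
    field_simp
    ring

theorem nmab_standard_form_reduction_general (γ τ : ℝ)
    (hτ : 0 < τ) :
    ∀ m : ℕ, ∀ μ n lam : ℝ, 0 < n →
      V γ τ m μ n lam =
        (Real.sqrt τ)⁻¹ * V γ 1 m 0 (n / τ) (Real.sqrt τ * (lam - μ)) := by
  intro m μ n lam hn
  have hs : 0 < Real.sqrt τ := Real.sqrt_pos.mpr hτ
  have hrescale := mul_V_eq_V_rescaled γ hτ hs μ lam m μ n hn
  rw [Real.sq_sqrt hτ.le, div_self hτ.ne', sub_self, mul_zero] at hrescale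
  rw [← hrescale, inv_mul_cancel_left₀ hs.ne']

/-- Invariance reduction to standard form:
`V_m(μ, n, γ, τ, λ) = τ^{−1/2} · V_m(0, n/τ, γ, 1, √τ·(λ − μ))`, so only
calculations with posterior mean `0` and observation precision `1` are
needed. -/
theorem nmab_standard_form_reduction (γ τ : ℝ)
    (hγ0 : 0 ≤ γ) (hγ1 : γ < 1) (hτ : 0 < τ) :
    ∀ m : ℕ, ∀ μ n lam : ℝ, 0 < n →
      V γ τ m μ n lam =
        (Real.sqrt τ)⁻¹ * V γ 1 m 0 (n / τ) (Real.sqrt τ * (lam - μ)) :=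
  nmab_standard_form_reduction_general γ τ hτ
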